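/- Let W, X, Y, Z be Banach lattices with X, Y, Z Dedekind complete. For positive operators A ∈ L^r(Y,Z) and B ∈ L^r(W,X), the operator norm of M_{A,B} satisfies ‖M_{A,B}‖ = ‖A‖·‖B‖, where M_{A,B} acts between the Banach lattices (L^r(X,Y), ‖·‖_r) and (L^r(W,Z), ‖·‖_r). -/

import Mathlib

/-!
Upper bound: by Riesz–Kantorovich a regular `T : X → Y` has a modulus `|T|` (`Y` is Dedekind
complete), and `-A |T| B ≤ A T B ≤ A |T| B`, so `‖A T B‖ᵣ ≤ ‖A‖ ‖|T|‖ ‖B‖`. Positive operators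
on Banach lattices are bounded, which keeps all these operator norms finite.

Lower bound: for positive unit vectors `y ∈ Y`, `w ∈ W` and a positive norming functional `f` of
`B w`, the rank-one operator `f ⊗ y` has regular norm at most one and `A (f ⊗ y) B w = ‖B w‖ A y`.
As `‖A‖` and `‖B‖` are attained on positive vectors, `‖A‖ ‖B‖ ≤ ‖M_{A,B}‖`.
-/

open Set Filter

namespace TwoSided

section Defs

variable {E F : Type*}
  [AddCommGroup E] [Lattice E] [Module ℝ E]
  [AddCommGroup F] [Lattice F] [Module ℝ F]

/-- A linear operator between ordered vector spaces is positive if it maps the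
positive cone into the positive cone. -/
def Positive (T : E →ₗ[ℝ] F) : Prop := ∀ x : E, 0 ≤ x → 0 ≤ T x

/-- A regular operator is a difference of two positive operators. -/
def IsRegular (T : E →ₗ[ℝ] F) : Prop :=
  ∃ P Q : E →ₗ[ℝ] F, Positive P ∧ Positive Q ∧ T = P - Q

/-- `U` is the supremum of `S` and `T` in the operator order. -/
def IsOpSup (S T U : E →ₗ[ℝ] F) : Prop :=
  Positive (U - S) ∧ Positive (U - T) ∧
    ∀ V : E →ₗ[ℝ] F, Positive (V - S) → Positive (V - T) → Positive (V - U)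

/-- `U` is the infimum of `S` and `T` in the operator order. -/
def IsOpInf (S T U : E →ₗ[ℝ] F) : Prop :=
  Positive (S - U) ∧ Positive (T - U) ∧
    ∀ V : E →ₗ[ℝ] F, Positive (S - V) → Positive (T - V) → Positive (U - V)

/-- `U` is the least upper bound of the set `s` of operators in the operator order. -/
def IsOpLUB (s : Set (E →ₗ[ℝ] F)) (U : E →ₗ[ℝ] F) : Prop :=
  (∀ C ∈ s, Positive (U - C)) ∧
    ∀ V : E →ₗ[ℝ] F, (∀ C ∈ s, Positive (V - C)) → Positive (V - U)

/-- `M` is the modulus `|T| = T ⊔ (-T)` of the operator `T`. -/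
def IsModulus (T M : E →ₗ[ℝ] F) : Prop := IsOpSup T (-T) M

/-- An operator is order continuous if it maps nets decreasing to `0`
to nets order converging to `0`. -/
def OrdContinuous (T : E →ₗ[ℝ] F) : Prop :=
  ∀ (ι : Type) [SemilatticeSup ι] [Nonempty ι] (a : ι → E),
    Antitone a → IsGLB (Set.range a) 0 →
      ∃ b : ι → F, Antitone b ∧ IsGLB (Set.range b) 0 ∧
        ∀ i, T (a i) ≤ b i ∧ -(T (a i)) ≤ b i

/-- A lattice is Dedekind complete if every nonempty set bounded above has a
least upper bound. -/
def DedekindComplete (G : Type*) [Preorder G] : Prop :=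
  ∀ s : Set G, s.Nonempty → BddAbove s → ∃ a, IsLUB s a

end Defs

section Two

variable {W X Y Z : Type*}
  [AddCommGroup W] [Lattice W] [Module ℝ W]
  [AddCommGroup X] [Lattice X] [Module ℝ X]
  [AddCommGroup Y] [Lattice Y] [Module ℝ Y]
  [AddCommGroup Z] [Lattice Z] [Module ℝ Z]

/-- The two-sided multiplication operator `T ↦ A ∘ T ∘ B`. -/
def MAB (A : Y →ₗ[ℝ] Z) (B : W →ₗ[ℝ] X) :
    (X →ₗ[ℝ] Y) →ₗ[ℝ] (W →ₗ[ℝ] Z) where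
  toFun T := A ∘ₗ T ∘ₗ B
  map_add' := by intro S T; ext w; simp
  map_smul' := by intro c T; ext w; simp

/-- Positivity for operators between spaces of operators, with respect to the
operator order. -/
def Positive2 (Φ : (X →ₗ[ℝ] Y) →ₗ[ℝ] (W →ₗ[ℝ] Z)) : Prop :=
  ∀ T : X →ₗ[ℝ] Y, Positive T → Positive (Φ T)

def IsRegular2 (Φ : (X →ₗ[ℝ] Y) →ₗ[ℝ] (W →ₗ[ℝ] Z)) : Prop :=
  ∃ Φ₁ Φ₂, Positive2 (W := W) (X := X) (Y := Y) (Z := Z) Φ₁ ∧ Positive2 Φ₂ ∧ Φ = Φ₁ - Φ₂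

def IsOpSup2 (Φ Ψ Θ : (X →ₗ[ℝ] Y) →ₗ[ℝ] (W →ₗ[ℝ] Z)) : Prop :=
  Positive2 (Θ - Φ) ∧ Positive2 (Θ - Ψ) ∧
    ∀ Ξ : (X →ₗ[ℝ] Y) →ₗ[ℝ] (W →ₗ[ℝ] Z),
      Positive2 (Ξ - Φ) → Positive2 (Ξ - Ψ) → Positive2 (Ξ - Θ)

def IsOpInf2 (Φ Ψ Θ : (X →ₗ[ℝ] Y) →ₗ[ℝ] (W →ₗ[ℝ] Z)) : Prop :=
  Positive2 (Φ - Θ) ∧ Positive2 (Ψ - Θ) ∧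
    ∀ Ξ : (X →ₗ[ℝ] Y) →ₗ[ℝ] (W →ₗ[ℝ] Z),
      Positive2 (Φ - Ξ) → Positive2 (Ψ - Ξ) → Positive2 (Θ - Ξ)

def IsModulus2 (Φ M : (X →ₗ[ℝ] Y) →ₗ[ℝ] (W →ₗ[ℝ] Z)) : Prop := IsOpSup2 Φ (-Φ) M

end Two

end TwoSided

namespace TwoSided

section NormDefs

variable {E F : Type*}
  [NormedAddCommGroup E] [Lattice E] [HasSolidNorm E] [IsOrderedAddMonoid E] [NormedSpace ℝ E]
  [NormedAddCommGroup F] [Lattice F] [HasSolidNorm F] [IsOrderedAddMonoid F] [NormedSpace ℝ F]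

/-- The operator norm of a (not necessarily continuous) linear map. -/
noncomputable def opNorm (T : E →ₗ[ℝ] F) : ℝ :=
  sSup ((fun x => ‖T x‖) '' Metric.closedBall (0 : E) 1)

/-- The regular norm `‖T‖ᵣ = ‖|T|‖` of a regular operator. -/
noncomputable def regNorm (T : E →ₗ[ℝ] F) : ℝ :=
  sSup { c | ∃ M : E →ₗ[ℝ] F, IsModulus T M ∧ c = opNorm M }

/-- A Banach lattice has order continuous norm if every net decreasing to `0`
converges to `0` in norm. -/
def OrderContinuousNorm (G : Type*) [NormedAddCommGroup G] [Lattice G] [HasSolidNorm G] [IsOrderedAddMonoid G] : Prop :=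
  ∀ (ι : Type) [SemilatticeSup ι] [Nonempty ι] (a : ι → G),
    Antitone a → IsGLB (Set.range a) 0 →
      Filter.Tendsto (fun i => ‖a i‖) Filter.atTop (nhds 0)

end NormDefs

section NormTwo

variable {W X Y Z : Type*}
  [NormedAddCommGroup W] [Lattice W] [HasSolidNorm W] [IsOrderedAddMonoid W] [NormedSpace ℝ W]
  [NormedAddCommGroup X] [Lattice X] [HasSolidNorm X] [IsOrderedAddMonoid X] [NormedSpace ℝ X]
  [NormedAddCommGroup Y] [Lattice Y] [HasSolidNorm Y] [IsOrderedAddMonoid Y] [NormedSpace ℝ Y]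
  [NormedAddCommGroup Z] [Lattice Z] [HasSolidNorm Z] [IsOrderedAddMonoid Z] [NormedSpace ℝ Z]

/-- The operator norm of `Φ : Lʳ(X,Y) → Lʳ(W,Z)` with respect to the regular
norms on the spaces of regular operators. -/
noncomputable def opNorm2 (Φ : (X →ₗ[ℝ] Y) →ₗ[ℝ] (W →ₗ[ℝ] Z)) : ℝ :=
  sSup ((fun T => regNorm (Φ T)) '' { T : X →ₗ[ℝ] Y | IsRegular T ∧ regNorm T ≤ 1 })

/-- The regular norm `‖Φ‖ᵣ = ‖|Φ|‖` of a regular operator between spaces of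
regular operators, each endowed with its regular norm. -/
noncomputable def regNorm2 (Φ : (X →ₗ[ℝ] Y) →ₗ[ℝ] (W →ₗ[ℝ] Z)) : ℝ :=
  sSup { c | ∃ Ψ, IsModulus2 Φ Ψ ∧ c = opNorm2 Ψ }

end NormTwo

end TwoSided

open Topology Pointwise

section NormedLattice

variable {G : Type*} [NormedAddCommGroup G] [Lattice G] [HasSolidNorm G] [IsOrderedAddMonoid G]

lemma norm_le_norm_of_nonneg_of_le {a b : G} (ha : 0 ≤ a) (hab : a ≤ b) : ‖a‖ ≤ ‖b‖ :=
  norm_le_norm_of_abs_le_abs (abs_le_abs_of_nonneg ha hab)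

lemma norm_posPart_le (a : G) : ‖a⁺‖ ≤ ‖a‖ := by
  refine norm_le_norm_of_abs_le_abs ?_
  rw [abs_of_nonneg (posPart_nonneg a), ← posPart_add_negPart]
  exact le_add_of_nonneg_right (negPart_nonneg a)

variable [NormedSpace ℝ G]

/-- The dyadic multiples `(⌊c 2ⁿ⌋₊ / 2ⁿ) • x` of `x ≥ 0` are positive by repeated halving, and
they converge to `c • x` inside the closed positive cone. -/
instance HasSolidNorm.posSMulMono : PosSMulMono ℝ G := by
  refine .of_smul_nonneg fun c hc x hx => ?_
  have halve : ∀ n : ℕ, 0 ≤ ((2 : ℝ) ^ n)⁻¹ • x := by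
    intro n
    induction n with
    | zero => simpa using hx
    | succ n ih =>
      have double : ((2 : ℝ) ^ (n + 1))⁻¹ + ((2 : ℝ) ^ (n + 1))⁻¹ = ((2 : ℝ) ^ n)⁻¹ := by
        field_simp; ring
      exact nsmul_two_semiclosed (by rwa [two_nsmul, ← add_smul, double])
  have dyadic : ∀ n : ℕ, 0 ≤ ((⌊c * 2 ^ n⌋₊ : ℝ) / 2 ^ n) • x := fun n => by
    rw [div_eq_mul_inv, mul_smul, Nat.cast_smul_eq_nsmul]
    exact nsmul_nonneg (halve n) _
  have hlim : Tendsto (fun n : ℕ => (⌊c * 2 ^ n⌋₊ : ℝ) / 2 ^ n) atTop (𝓝 c) :=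
    (tendsto_nat_floor_mul_div_atTop hc).comp (tendsto_pow_atTop_atTop_of_one_lt one_lt_two)
  exact isClosed_nonneg.mem_of_tendsto (hlim.smul_const x) (Eventually.of_forall dyadic)

lemma posPart_smul_of_nonneg {c : ℝ} (hc : 0 ≤ c) (a : G) : (c • a)⁺ = c • a⁺ := by
  rcases hc.eq_or_lt with rfl | hc
  · simp
  · simpa only [OrderIso.smulRight_apply, posPart_def, smul_zero] using
      ((OrderIso.smulRight hc).map_sup a 0).symm

end NormedLattice

section LatticeGroup

/-- Riesz decomposition, with first summand `(v ⊓ x) ⊔ -x`. -/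
lemma Icc_neg_add_eq {E : Type*} [AddCommGroup E] [Lattice E] [IsOrderedAddMonoid E] {x y : E}
    (hx : 0 ≤ x) (hy : 0 ≤ y) : Icc (-(x + y)) (x + y) = Icc (-x) x + Icc (-y) y := by
  refine Subset.antisymm (fun v ⟨h₁, h₂⟩ => ?_) ?_
  · have hrest : v - ((v ⊓ x) ⊔ -x) = (0 ⊔ (v - x)) ⊓ (v + x) := by
      rw [sub_sup, sub_inf, sub_self, sub_neg_eq_add]
    refine ⟨(v ⊓ x) ⊔ -x, ⟨le_sup_right, sup_le inf_le_right (neg_le_self hx)⟩,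
      v - ((v ⊓ x) ⊔ -x), ⟨?_, ?_⟩, add_sub_cancel _ _⟩
    · rw [hrest]
      refine le_inf ((neg_nonpos.2 hy).trans le_sup_left) ?_
      calc -y = -(x + y) + x := by abel
        _ ≤ v + x := add_le_add h₁ le_rfl
    · rw [hrest]
      refine inf_le_left.trans (sup_le hy ?_)
      calc v - x ≤ x + y - x := sub_le_sub_right h₂ x
        _ = y := add_sub_cancel_left x y
  · simpa only [neg_add] using Icc_add_Icc_subset (-x) x (-y) y

variable {E F : Type*} [AddCommGroup E] [Lattice E] [Module ℝ E]
  [AddCommGroup F] [Lattice F] [Module ℝ F]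

lemma IsLUB.image_Icc_smul [PosSMulMono ℝ E] [PosSMulMono ℝ F] {T : E →ₗ[ℝ] F} {x : E} {a : F}
    {c : ℝ} (hc : 0 < c) (ha : IsLUB (T '' Icc (-x) x) a) :
    IsLUB (T '' Icc (-(c • x)) (c • x)) (c • a) := by
  have hIcc : Icc (-(c • x)) (c • x) = c • Icc (-x) x := by
    rw [← smul_neg, ← image_smul]
    exact ((OrderIso.smulRight hc).image_Icc _ _).symm
  rw [hIcc, image_smul_set, ← image_smul]
  exact (OrderIso.smulRight hc).isLUB_image'.2 ha

variable [IsOrderedAddMonoid E] [IsOrderedAddMonoid F]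

lemma IsLUB.image_Icc_add {T : E →ₗ[ℝ] F} {x y : E} {a b : F} (hx : 0 ≤ x) (hy : 0 ≤ y)
    (ha : IsLUB (T '' Icc (-x) x) a) (hb : IsLUB (T '' Icc (-y) y) b) :
    IsLUB (T '' Icc (-(x + y)) (x + y)) (a + b) := by
  rw [Icc_neg_add_eq hx hy, image_add]
  exact ha.add hb

end LatticeGroup

section ExtensionFromPositiveCone

lemma sub_eq_sub_of_additive_on_nonneg {E F : Type*} [AddCommGroup E] [LE E] [AddCommGroup F]
    {s : E → F} (hadd : ∀ x y, 0 ≤ x → 0 ≤ y → s (x + y) = s x + s y) {p q p' q' : E}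
    (hp : 0 ≤ p) (hq : 0 ≤ q) (hp' : 0 ≤ p') (hq' : 0 ≤ q') (h : p - q = p' - q') :
    s p - s q = s p' - s q' := by
  rw [sub_eq_sub_iff_add_eq_add] at h ⊢
  rw [← hadd p q' hp hq', ← hadd p' q hp' hq, h]

variable {E F : Type*} [AddCommGroup E] [Lattice E] [IsOrderedAddMonoid E] [Module ℝ E]
  [PosSMulMono ℝ E] [AddCommGroup F] [Module ℝ F]

/-- Kantorovich's extension; it is linear because `s p - s q` depends only on `p - q` for
`p, q ≥ 0` (`sub_eq_sub_of_additive_on_nonneg`). -/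
def LinearMap.ofNonneg (s : E → F) (hadd : ∀ x y, 0 ≤ x → 0 ≤ y → s (x + y) = s x + s y)
    (hsmul : ∀ c : ℝ, 0 < c → ∀ x, 0 ≤ x → s (c • x) = c • s x) : E →ₗ[ℝ] F where
  toFun x := s x⁺ - s x⁻
  map_add' a b := by
    have hpos := add_nonneg (posPart_nonneg a) (posPart_nonneg b)
    have hneg := add_nonneg (negPart_nonneg a) (negPart_nonneg b)
    rw [sub_eq_sub_of_additive_on_nonneg hadd (posPart_nonneg _) (negPart_nonneg _) hpos hneg
      (by rw [posPart_sub_negPart, add_sub_add_comm, posPart_sub_negPart, posPart_sub_negPart]),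
      hadd _ _ (posPart_nonneg a) (posPart_nonneg b), hadd _ _ (negPart_nonneg a) (negPart_nonneg b)]
    abel
  map_smul' c a := by
    rw [RingHom.id_apply, smul_sub]
    rcases lt_trichotomy c 0 with hc | rfl | hc
    · have hc' : 0 < -c := neg_pos.2 hc
      rw [sub_eq_sub_of_additive_on_nonneg hadd (posPart_nonneg _) (negPart_nonneg _)
        (smul_nonneg hc'.le (negPart_nonneg a)) (smul_nonneg hc'.le (posPart_nonneg a))
        (by rw [posPart_sub_negPart, ← smul_sub, neg_smul, ← smul_neg, neg_sub,
          posPart_sub_negPart]),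
        hsmul _ hc' _ (negPart_nonneg a), hsmul _ hc' _ (posPart_nonneg a), neg_smul, neg_smul]
      abel
    · simp
    · rw [sub_eq_sub_of_additive_on_nonneg hadd (posPart_nonneg _) (negPart_nonneg _)
        (smul_nonneg hc.le (posPart_nonneg a)) (smul_nonneg hc.le (negPart_nonneg a))
        (by rw [posPart_sub_negPart, ← smul_sub, posPart_sub_negPart]),
        hsmul _ hc _ (posPart_nonneg a), hsmul _ hc _ (negPart_nonneg a)]

lemma LinearMap.ofNonneg_apply_of_nonneg {s : E → F}
    (hadd : ∀ x y, 0 ≤ x → 0 ≤ y → s (x + y) = s x + s y)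
    (hsmul : ∀ c : ℝ, 0 < c → ∀ x, 0 ≤ x → s (c • x) = c • s x) {x : E} (hx : 0 ≤ x) :
    LinearMap.ofNonneg s hadd hsmul x = s x := by
  have hzero : s 0 = 0 := by simpa using hadd 0 0 le_rfl le_rfl
  show s x⁺ - s x⁻ = s x
  rw [sub_eq_sub_of_additive_on_nonneg hadd (posPart_nonneg _) (negPart_nonneg _) hx le_rfl
    (by rw [posPart_sub_negPart, sub_zero]), hzero, sub_zero]

end ExtensionFromPositiveCone

namespace TwoSided

section OperatorOrder

variable {E F G : Type*}
  [AddCommGroup E] [Lattice E] [Module ℝ E]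
  [AddCommGroup F] [Lattice F] [Module ℝ F]
  [AddCommGroup G] [Lattice G] [Module ℝ G]

lemma Positive.comp {A : F →ₗ[ℝ] G} {T : E →ₗ[ℝ] F} (hA : Positive A) (hT : Positive T) :
    Positive (A ∘ₗ T) := fun x hx => hA _ (hT x hx)

lemma Positive.isRegular {T : E →ₗ[ℝ] F} (hT : Positive T) : IsRegular T :=
  ⟨T, 0, hT, fun _ _ => le_rfl, (sub_zero T).symm⟩

lemma IsModulus.positive_add {T M : E →ₗ[ℝ] F} (hM : IsModulus T M) : Positive (M + T) := by
  simpa only [sub_neg_eq_add] using hM.2.1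

lemma Positive.mab {W X Y Z : Type*} [AddCommGroup W] [Lattice W] [Module ℝ W]
    [AddCommGroup X] [Lattice X] [Module ℝ X] [AddCommGroup Y] [Lattice Y] [Module ℝ Y]
    [AddCommGroup Z] [Lattice Z] [Module ℝ Z] {A : Y →ₗ[ℝ] Z} {B : W →ₗ[ℝ] X} {T : X →ₗ[ℝ] Y}
    (hT : Positive T) (hA : Positive A) (hB : Positive B) : Positive (MAB A B T) :=
  fun w hw => hA _ (hT _ (hB w hw))

variable [IsOrderedAddMonoid F]

lemma positive_sub_iff {S T : E →ₗ[ℝ] F} : Positive (T - S) ↔ ∀ x, 0 ≤ x → S x ≤ T x := by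
  simp only [Positive, LinearMap.sub_apply, sub_nonneg]

lemma positive_sub_neg_iff {S T : E →ₗ[ℝ] F} : Positive (T - -S) ↔ ∀ x, 0 ≤ x → -S x ≤ T x := by
  simp only [Positive, LinearMap.sub_apply, LinearMap.neg_apply, sub_nonneg]

lemma IsModulus.positive {T M : E →ₗ[ℝ] F} (hM : IsModulus T M) : Positive M := fun x hx =>
  nsmul_two_semiclosed <| by
    simpa [two_nsmul] using add_le_add (positive_sub_iff.1 hM.1 x hx)
      (positive_sub_neg_iff.1 hM.2.1 x hx)

lemma Positive.isModulus {T : E →ₗ[ℝ] F} (hT : Positive T) : IsModulus T T := by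
  refine ⟨?_, positive_sub_neg_iff.2 fun x hx => neg_le_self (hT x hx), fun _ h _ => h⟩
  rw [sub_self]
  exact fun _ _ => le_rfl

variable [IsOrderedAddMonoid E]

lemma Positive.monotone {T : E →ₗ[ℝ] F} (hT : Positive T) : Monotone T := fun a b hab => by
  simpa using hT (b - a) (sub_nonneg.2 hab)

lemma Positive.abs_apply_le {T : E →ₗ[ℝ] F} (hT : Positive T) (x : E) : |T x| ≤ T |x| :=
  abs_le'.2 ⟨hT.monotone (le_abs_self x), by simpa using hT.monotone (neg_le_abs x)⟩

lemma eq_of_positive_sub {S T : E →ₗ[ℝ] F} (h₁ : Positive (T - S)) (h₂ : Positive (S - T)) :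
    S = T := by
  have hpos : ∀ x, 0 ≤ x → S x = T x := fun x hx =>
    le_antisymm (positive_sub_iff.1 h₁ x hx) (positive_sub_iff.1 h₂ x hx)
  ext x
  rw [← posPart_sub_negPart x, map_sub, map_sub, hpos _ (posPart_nonneg x),
    hpos _ (negPart_nonneg x)]

lemma IsModulus.unique {T M M' : E →ₗ[ℝ] F} (hM : IsModulus T M) (hM' : IsModulus T M') :
    M = M' :=
  eq_of_positive_sub (hM.2.2 M' hM'.1 hM'.2.1) (hM'.2.2 M hM.1 hM.2.1)

end OperatorOrder

section RieszKantorovich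

variable {E F : Type*}
  [AddCommGroup E] [Lattice E] [IsOrderedAddMonoid E] [Module ℝ E]
  [AddCommGroup F] [Lattice F] [IsOrderedAddMonoid F] [Module ℝ F]

lemma isModulus_of_isLUB {T M : E →ₗ[ℝ] F} (hM : ∀ x, 0 ≤ x → IsLUB (T '' Icc (-x) x) (M x)) :
    IsModulus T M := by
  refine ⟨positive_sub_iff.2 fun x hx => (hM x hx).1 (mem_image_of_mem T ⟨neg_le_self hx, le_rfl⟩),
    positive_sub_neg_iff.2 fun x hx => ?_, fun V h₁ h₂ => positive_sub_iff.2 fun x hx => ?_⟩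
  · rw [← map_neg]
    exact (hM x hx).1 (mem_image_of_mem T ⟨le_rfl, neg_le_self hx⟩)
  · refine (hM x hx).2 ?_
    rintro _ ⟨v, ⟨hv₁, hv₂⟩, rfl⟩
    -- `(V - T) (x + v) + (V + T) (x - v) = 2 • (V x - T v)`
    have h := add_nonneg (h₁ (x + v) (neg_le_iff_add_nonneg'.1 hv₁)) (h₂ (x - v) (sub_nonneg.2 hv₂))
    refine sub_nonneg.1 (nsmul_two_semiclosed ?_)
    convert h using 1
    simp only [LinearMap.sub_apply, LinearMap.neg_apply, map_add, map_sub]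
    abel

/-- Riesz–Kantorovich: `|T| x = sup {T v | -x ≤ v ≤ x}` for `x ≥ 0`. -/
theorem exists_isModulus [PosSMulMono ℝ E] [PosSMulMono ℝ F] (hF : DedekindComplete F)
    {T : E →ₗ[ℝ] F} (hT : IsRegular T) : ∃ M, IsModulus T M := by
  obtain ⟨P, Q, hP, hQ, rfl⟩ := hT
  have hbdd : ∀ x : E, BddAbove ((P - Q) '' Icc (-x) x) := fun x => ⟨P x + Q x, by
    rintro _ ⟨v, ⟨hv₁, hv₂⟩, rfl⟩
    rw [LinearMap.sub_apply, sub_eq_add_neg, ← map_neg]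
    exact add_le_add (hP.monotone hv₂) (hQ.monotone (neg_le.1 hv₁))⟩
  choose! s hs using fun x (hx : 0 ≤ x) =>
    hF ((P - Q) '' Icc (-x) x) ⟨_, mem_image_of_mem _ ⟨neg_le_self hx, le_rfl⟩⟩ (hbdd x)
  have hadd : ∀ x y, 0 ≤ x → 0 ≤ y → s (x + y) = s x + s y := fun x y hx hy =>
    (hs _ (add_nonneg hx hy)).unique (IsLUB.image_Icc_add hx hy (hs x hx) (hs y hy))
  have hsmul : ∀ c : ℝ, 0 < c → ∀ x, 0 ≤ x → s (c • x) = c • s x := fun c hc x hx =>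
    (hs _ (smul_nonneg hc.le hx)).unique (IsLUB.image_Icc_smul hc (hs x hx))
  refine ⟨LinearMap.ofNonneg s hadd hsmul, isModulus_of_isLUB fun x hx => ?_⟩
  rw [LinearMap.ofNonneg_apply_of_nonneg hadd hsmul hx]
  exact hs x hx

end RieszKantorovich

section OpNorm

variable {E F G : Type*} [NormedAddCommGroup E] [NormedSpace ℝ E]
  [NormedAddCommGroup F] [NormedSpace ℝ F] [NormedAddCommGroup G] [NormedSpace ℝ G]

lemma opNorm_coe (T : E →L[ℝ] F) : opNorm (T : E →ₗ[ℝ] F) = ‖T‖ :=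
  T.sSup_unitClosedBall_eq_norm

lemma opNorm_nonneg (T : E →ₗ[ℝ] F) : 0 ≤ opNorm T :=
  Real.sSup_nonneg (by rintro _ ⟨x, -, rfl⟩; exact norm_nonneg _)

lemma opNorm_le_of_bound {T : E →ₗ[ℝ] F} {C : ℝ} (hC : 0 ≤ C) (h : ∀ x, ‖T x‖ ≤ C * ‖x‖) :
    opNorm T ≤ C :=
  (opNorm_coe (T.mkContinuous C h)).trans_le (T.mkContinuous_norm_le hC h)

lemma norm_apply_le_opNorm {T : E →ₗ[ℝ] F} (hT : Continuous T) {x : E} (hx : ‖x‖ ≤ 1) :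
    ‖T x‖ ≤ opNorm T := by
  have h := (⟨T, hT⟩ : E →L[ℝ] F).unit_le_opNorm x hx
  rwa [← opNorm_coe] at h

lemma opNorm_comp_le {A : F →ₗ[ℝ] G} {B : E →ₗ[ℝ] F} (hA : Continuous A) (hB : Continuous B) :
    opNorm (A ∘ₗ B) ≤ opNorm A * opNorm B := by
  have h := (⟨A, hA⟩ : F →L[ℝ] G).opNorm_comp_le ⟨B, hB⟩
  rwa [← opNorm_coe, ← opNorm_coe, ← opNorm_coe] at h

end OpNorm

section PositiveOperator

variable {E F : Type*}
  [NormedAddCommGroup E] [Lattice E] [IsOrderedAddMonoid E] [NormedSpace ℝ E]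
  [NormedAddCommGroup F] [Lattice F] [HasSolidNorm F] [IsOrderedAddMonoid F] [NormedSpace ℝ F]
  {T : E →ₗ[ℝ] F}

lemma Positive.norm_apply_le_norm_apply_abs (hT : Positive T) (x : E) : ‖T x‖ ≤ ‖T |x|‖ :=
  norm_le_norm_of_abs_le_abs <| by rw [abs_of_nonneg (hT _ (abs_nonneg x))]; exact hT.abs_apply_le x

variable [HasSolidNorm E]

lemma Positive.norm_apply_le_mul {C : ℝ} (hT : Positive T)
    (h : ∀ y, 0 ≤ y → ‖y‖ ≤ 1 → ‖T y‖ ≤ C) (x : E) : ‖T x‖ ≤ C * ‖x‖ := by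
  rcases eq_or_ne x 0 with rfl | hx
  · simp
  have hx' : 0 < ‖x‖ := norm_pos_iff.2 hx
  have hu := h (‖x‖⁻¹ • |x|) (smul_nonneg (inv_nonneg.2 hx'.le) (abs_nonneg x)) (by
    rw [norm_smul, norm_inv, norm_norm, norm_abs_eq_norm, inv_mul_cancel₀ hx'.ne'])
  rw [map_smul, norm_smul, norm_inv, norm_norm, inv_mul_le_iff₀ hx'] at hu
  calc ‖T x‖ ≤ ‖T |x|‖ := hT.norm_apply_le_norm_apply_abs x
    _ ≤ C * ‖x‖ := by rwa [mul_comm]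

lemma Positive.opNorm_le {C : ℝ} (hT : Positive T) (h : ∀ y, 0 ≤ y → ‖y‖ ≤ 1 → ‖T y‖ ≤ C) :
    opNorm T ≤ C :=
  opNorm_le_of_bound (by simpa using h 0 le_rfl (by simp)) (hT.norm_apply_le_mul h)

lemma Positive.opNorm_mul_le {c s : ℝ} (hT : Positive T) (hc : 0 ≤ c)
    (h : ∀ y, 0 ≤ y → ‖y‖ ≤ 1 → ‖T y‖ * c ≤ s) : opNorm T * c ≤ s := by
  rcases hc.eq_or_lt with rfl | hc
  · simpa using h 0 le_rfl (by simp)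
  rw [← le_div_iff₀ hc]
  exact hT.opNorm_le fun y hy hy₁ => (le_div_iff₀ hc).2 (h y hy hy₁)

/-- If positive `T` were unbounded on the positive unit ball, `∑ 2⁻ⁿ yₙ` with `‖T yₙ‖ > n 2ⁿ`
would be a positive vector whose image dominates every `2⁻ⁿ T yₙ`. -/
lemma Positive.exists_bound_of_nonneg [CompleteSpace E] (hT : Positive T) :
    ∃ C, ∀ y, 0 ≤ y → ‖y‖ ≤ 1 → ‖T y‖ ≤ C := by
  by_contra! h
  choose y hy₀ hy₁ hy using fun n : ℕ => h (n * 2 ^ n)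
  set u : ℕ → E := fun n => (1 / 2 : ℝ) ^ n • y n
  have hu₀ : ∀ n, 0 ≤ u n := fun n => smul_nonneg (by positivity) (hy₀ n)
  have hu : Summable u := .of_norm_bounded summable_geometric_two fun n => by
    rw [norm_smul, norm_pow, Real.norm_of_nonneg (by norm_num : (0 : ℝ) ≤ 1 / 2)]
    exact mul_le_of_le_one_right (by positivity) (hy₁ n)
  obtain ⟨n, hn⟩ := exists_nat_gt ‖T (∑' n, u n)‖
  have hlarge : (n : ℝ) < ‖T (u n)‖ := by
    rw [map_smul, norm_smul, norm_pow, Real.norm_of_nonneg (by norm_num : (0 : ℝ) ≤ 1 / 2)]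
    calc (n : ℝ) = (1 / 2 : ℝ) ^ n * (n * 2 ^ n) := by rw [mul_left_comm, ← mul_pow]; norm_num
      _ < (1 / 2 : ℝ) ^ n * ‖T (y n)‖ := mul_lt_mul_of_pos_left (hy n) (by positivity)
  have hle : ‖T (u n)‖ ≤ ‖T (∑' n, u n)‖ :=
    norm_le_norm_of_nonneg_of_le (hT _ (hu₀ n)) (hT.monotone (hu.le_tsum n fun j _ => hu₀ j))
  linarith

lemma Positive.continuous [CompleteSpace E] (hT : Positive T) : Continuous T := by
  obtain ⟨C, hC⟩ := hT.exists_bound_of_nonneg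
  exact AddMonoidHomClass.continuous_of_bound T C (hT.norm_apply_le_mul hC)

lemma Positive.opNorm_mono {S : E →ₗ[ℝ] F} (hS : Positive S) (hST : Positive (T - S))
    (hT : Continuous T) : opNorm S ≤ opNorm T :=
  hS.opNorm_le fun y hy hy₁ => (norm_le_norm_of_nonneg_of_le (hS y hy)
    (positive_sub_iff.1 hST y hy)).trans (norm_apply_le_opNorm hT hy₁)

end PositiveOperator

section RegularNorm

variable {E F : Type*}
  [NormedAddCommGroup E] [Lattice E] [IsOrderedAddMonoid E] [NormedSpace ℝ E]
  [NormedAddCommGroup F] [Lattice F] [IsOrderedAddMonoid F] [NormedSpace ℝ F]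
  {T : E →ₗ[ℝ] F}

lemma IsModulus.regNorm_eq {M : E →ₗ[ℝ] F} (hM : IsModulus T M) : regNorm T = opNorm M := by
  have hset : {c | ∃ M' : E →ₗ[ℝ] F, IsModulus T M' ∧ c = opNorm M'} = {opNorm M} :=
    Set.ext fun _ => ⟨fun ⟨_, hM', hc⟩ => hc.trans (congrArg opNorm (hM'.unique hM)),
      fun hc => ⟨M, hM, hc⟩⟩
  rw [regNorm, hset, csSup_singleton]

lemma Positive.regNorm_eq (hT : Positive T) : regNorm T = opNorm T :=
  hT.isModulus.regNorm_eq

variable [HasSolidNorm E] [HasSolidNorm F]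

lemma regNorm_le_opNorm {V : E →ₗ[ℝ] F} (hV : Continuous V) (h₁ : Positive (V - T))
    (h₂ : Positive (V + T)) : regNorm T ≤ opNorm V := by
  refine Real.sSup_le ?_ (opNorm_nonneg V)
  rintro _ ⟨M, hM, rfl⟩
  exact hM.positive.opNorm_mono (hM.2.2 V h₁ (by rwa [sub_neg_eq_add])) hV

end RegularNorm

section PositiveFunctional

variable {E : Type*}
  [NormedAddCommGroup E] [Lattice E] [HasSolidNorm E] [IsOrderedAddMonoid E] [NormedSpace ℝ E]

/-- Hahn–Banach, dominated by the sublinear functional `z ↦ ‖z⁺‖`. -/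
lemma exists_positive_norming_functional {x : E} (hx : 0 ≤ x) :
    ∃ f : E →ₗ[ℝ] ℝ, Positive f ∧ (∀ z, |f z| ≤ ‖z‖) ∧ f x = ‖x‖ := by
  rcases eq_or_ne x 0 with rfl | hx₀
  · exact ⟨0, fun _ _ => le_rfl, by simp, by simp⟩
  set f₀ : E →ₗ.[ℝ] ℝ := LinearPMap.mkSpanSingleton x ‖x‖ hx₀
  have hdom : ∀ z : f₀.domain, f₀ z ≤ ‖(z : E)⁺‖ := by
    rintro ⟨z, hz⟩
    obtain ⟨c, rfl⟩ := Submodule.mem_span_singleton.1 hz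
    rw [LinearPMap.mkSpanSingleton'_apply, smul_eq_mul]
    rcases le_or_gt 0 c with hc | hc
    · rw [posPart_of_nonneg (smul_nonneg hc hx), norm_smul, Real.norm_of_nonneg hc, RingHom.id_apply]
    · exact (mul_nonpos_of_nonpos_of_nonneg hc.le (norm_nonneg x)).trans (norm_nonneg _)
  obtain ⟨f, hfx, hf⟩ := exists_extension_of_le_sublinear f₀ (fun z => ‖z⁺‖)
    (fun c hc z => by rw [posPart_smul_of_nonneg hc.le, norm_smul, Real.norm_of_nonneg hc.le])
    (fun y z => (norm_le_norm_of_nonneg_of_le (posPart_nonneg _) (sup_le (add_le_add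
      (le_posPart y) (le_posPart z)) (add_nonneg (posPart_nonneg y) (posPart_nonneg z)))).trans
      (norm_add_le _ _)) hdom
  have hneg : ∀ z, -f z ≤ ‖(-z)⁺‖ := fun z => by simpa using hf (-z)
  refine ⟨f, fun z hz => ?_, fun z => abs_le.2 ⟨?_, (hf z).trans (norm_posPart_le z)⟩, ?_⟩
  · simpa [posPart_neg, negPart_eq_zero.2 hz] using hneg z
  · exact neg_le.1 ((hneg z).trans (by simpa using norm_posPart_le (-z)))
  · exact (hfx ⟨x, Submodule.mem_span_singleton_self x⟩).trans
      (LinearPMap.mkSpanSingleton_apply ℝ ℝ hx₀ ‖x‖)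

end PositiveFunctional

section TwoSidedMultiplication

variable {W X Y Z : Type*}
  [NormedAddCommGroup W] [Lattice W] [HasSolidNorm W] [IsOrderedAddMonoid W] [NormedSpace ℝ W]
  [NormedAddCommGroup X] [Lattice X] [HasSolidNorm X] [IsOrderedAddMonoid X] [NormedSpace ℝ X]
  [NormedAddCommGroup Y] [Lattice Y] [HasSolidNorm Y] [IsOrderedAddMonoid Y] [NormedSpace ℝ Y]
  [NormedAddCommGroup Z] [Lattice Z] [HasSolidNorm Z] [IsOrderedAddMonoid Z] [NormedSpace ℝ Z]
  {A : Y →ₗ[ℝ] Z} {B : W →ₗ[ℝ] X}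

lemma regNorm_mab_le [CompleteSpace W] [CompleteSpace X] [CompleteSpace Y]
    (hY : DedekindComplete Y) (hA : Positive A) (hB : Positive B) {T : X →ₗ[ℝ] Y}
    (hT : IsRegular T) : regNorm (MAB A B T) ≤ opNorm A * regNorm T * opNorm B := by
  obtain ⟨N, hN⟩ := exists_isModulus hY hT
  have hNB : Continuous (N ∘ₗ B) := (hN.positive.comp hB).continuous
  rw [hN.regNorm_eq]
  calc regNorm (MAB A B T) ≤ opNorm (MAB A B N) := by
        refine regNorm_le_opNorm (hN.positive.mab hA hB).continuous ?_ ?_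
        · rw [← map_sub]
          exact hN.1.mab hA hB
        · rw [← map_add]
          exact hN.positive_add.mab hA hB
    _ ≤ opNorm A * opNorm (N ∘ₗ B) := opNorm_comp_le hA.continuous hNB
    _ ≤ opNorm A * (opNorm N * opNorm B) :=
        mul_le_mul_of_nonneg_left (opNorm_comp_le hN.positive.continuous hB.continuous)
          (opNorm_nonneg A)
    _ = opNorm A * opNorm N * opNorm B := (mul_assoc _ _ _).symm

/-- The rank-one operator `f ⊗ y`, with `f ≥ 0` a norming functional of `B w`. -/
lemma exists_positive_le_regNorm_mab [CompleteSpace W] (hA : Positive A) (hB : Positive B)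
    {y : Y} (hy : 0 ≤ y) (hy₁ : ‖y‖ ≤ 1) {w : W} (hw : 0 ≤ w) (hw₁ : ‖w‖ ≤ 1) :
    ∃ T : X →ₗ[ℝ] Y, Positive T ∧ regNorm T ≤ 1 ∧ ‖A y‖ * ‖B w‖ ≤ regNorm (MAB A B T) := by
  obtain ⟨f, hf, hf₁, hfw⟩ := exists_positive_norming_functional (hB w hw)
  have hT : Positive (f.smulRight y) := fun x hx => smul_nonneg (hf x hx) hy
  have hMT := hT.mab hA hB
  refine ⟨f.smulRight y, hT, ?_, ?_⟩
  · rw [hT.regNorm_eq]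
    refine opNorm_le_of_bound zero_le_one fun x => ?_
    rw [LinearMap.smulRight_apply, norm_smul, Real.norm_eq_abs, one_mul]
    simpa using mul_le_mul (hf₁ x) hy₁ (norm_nonneg y) (norm_nonneg x)
  · rw [hMT.regNorm_eq]
    calc ‖A y‖ * ‖B w‖ = ‖MAB A B (f.smulRight y) w‖ := by
          rw [show MAB A B (f.smulRight y) w = f (B w) • A y from map_smul A _ y, norm_smul, hfw,
            Real.norm_of_nonneg (norm_nonneg _), mul_comm]
      _ ≤ opNorm (MAB A B (f.smulRight y)) := norm_apply_le_opNorm hMT.continuous hw₁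

end TwoSidedMultiplication

end TwoSided

open TwoSided in
theorem statement6_general {W X Y Z : Type*}
    [NormedAddCommGroup W] [Lattice W] [HasSolidNorm W] [IsOrderedAddMonoid W] [NormedSpace ℝ W] [CompleteSpace W]
    [NormedAddCommGroup X] [Lattice X] [HasSolidNorm X] [IsOrderedAddMonoid X] [NormedSpace ℝ X] [CompleteSpace X]
    [NormedAddCommGroup Y] [Lattice Y] [HasSolidNorm Y] [IsOrderedAddMonoid Y] [NormedSpace ℝ Y] [CompleteSpace Y]
    [NormedAddCommGroup Z] [Lattice Z] [HasSolidNorm Z] [IsOrderedAddMonoid Z] [NormedSpace ℝ Z]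
    (hY : DedekindComplete Y)
    (A : Y →ₗ[ℝ] Z) (hA : Positive A) (B : W →ₗ[ℝ] X) (hB : Positive B) :
    opNorm2 (MAB A B) = opNorm A * opNorm B := by
  have upper : ∀ c ∈ (fun T => regNorm (MAB A B T)) ''
      {T : X →ₗ[ℝ] Y | IsRegular T ∧ regNorm T ≤ 1}, c ≤ opNorm A * opNorm B := by
    rintro _ ⟨T, ⟨hT, hT₁⟩, rfl⟩
    calc regNorm (MAB A B T) ≤ opNorm A * regNorm T * opNorm B := regNorm_mab_le hY hA hB hT
      _ ≤ opNorm A * 1 * opNorm B := by gcongr <;> exact opNorm_nonneg _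
      _ = opNorm A * opNorm B := by rw [mul_one]
  refine le_antisymm (Real.sSup_le upper (mul_nonneg (opNorm_nonneg A) (opNorm_nonneg B))) ?_
  refine hA.opNorm_mul_le (opNorm_nonneg B) fun y hy hy₁ => ?_
  rw [mul_comm]
  refine hB.opNorm_mul_le (norm_nonneg _) fun w hw hw₁ => ?_
  obtain ⟨T, hT, hT₁, hle⟩ := exists_positive_le_regNorm_mab hA hB hy hy₁ hw hw₁
  rw [mul_comm]
  exact hle.trans (le_csSup ⟨_, upper⟩ ⟨T, ⟨hT.isRegular, hT₁⟩, rfl⟩)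

open TwoSided in
theorem statement6 {W X Y Z : Type*}
    [NormedAddCommGroup W] [Lattice W] [HasSolidNorm W] [IsOrderedAddMonoid W] [NormedSpace ℝ W] [CompleteSpace W]
    [NormedAddCommGroup X] [Lattice X] [HasSolidNorm X] [IsOrderedAddMonoid X] [NormedSpace ℝ X] [CompleteSpace X]
    [NormedAddCommGroup Y] [Lattice Y] [HasSolidNorm Y] [IsOrderedAddMonoid Y] [NormedSpace ℝ Y] [CompleteSpace Y]
    [NormedAddCommGroup Z] [Lattice Z] [HasSolidNorm Z] [IsOrderedAddMonoid Z] [NormedSpace ℝ Z] [CompleteSpace Z]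
    (hX : DedekindComplete X) (hY : DedekindComplete Y) (hZ : DedekindComplete Z)
    (A : Y →ₗ[ℝ] Z) (hA : Positive A) (B : W →ₗ[ℝ] X) (hB : Positive B) :
    opNorm2 (MAB A B) = opNorm A * opNorm B :=
  statement6_general hY A hA B hB
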